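/- Imprimitive factorisation of the Rankin–Selberg L-function of f with itself: For every s ∈ ℂ with Re(s) > 2k+3, all three Dirichlet series below converge absolutely and ∑_{n≥1} a(n)²·n^{−s} = (∑_{n≥1} a(n²)·n^{−s}) · (∑_{n≥1} ψ(n)·n^{k+1−s}). Equivalently, setting L(f,f,s) = L_{(N)}(ψ², 2s−2−2k)·∑_{n≥1} a(n)² n^{−s} and L^{imp}(Sym² f, s) = L_{(N)}(ψ², 2s−2k−2)·∑_{n≥1} a(n²) n^{−s}, one has L(f,f,s) = L^{imp}(Sym² f, s) · L_{(N)}(ψ, s−k−1) in this region, where L_{(N)}(ψ, w) = ∑_{n≥1, gcd(n,N)=1} ψ(n)·n^{−w}. -/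

import Mathlib

/-!
The product of two Dirichlet series is the series of the Dirichlet convolution, and all
functions involved are multiplicative, so it suffices to prove
`a(n)² = ∑_{de = n} a(d²) ψ(e) e^{k+1}` at prime powers `n = pⁱ`. At every prime `p`
(at `p ∣ N` because `ψ(p) = 0`) the sequence `b r = a(pʳ)` satisfies
`b (r + 2) = b 1 · b (r + 1) - c · b r` with `c = ψ(p) p^{k+1}`, and any such sequence with
`b 0 = 1` obeys `b i ² = ∑_{j ≤ i} b (2j) c^{i-j}`, which is the required identity.
-/

open Complex LSeries ArithmeticFunction Finset

section Recurrence

variable {R : Type*} [CommRing R] {b : ℕ → R} {c : R}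

theorem apply_add_add_two_of_recurrence (hb0 : b 0 = 1)
    (hrec : ∀ r, b (r + 2) = b 1 * b (r + 1) - c * b r) (m n : ℕ) :
    b (m + n + 2) = b (m + 1) * b (n + 1) - c * (b m * b n) := by
  induction m generalizing n with
  | zero => rw [Nat.zero_add, hrec, hb0]; ring
  | succ m ih =>
    rw [show m + 1 + n + 2 = m + (n + 1) + 2 by ring, ih, hrec n, hrec m]
    ring

theorem sq_eq_sum_of_recurrence (hb0 : b 0 = 1)
    (hrec : ∀ r, b (r + 2) = b 1 * b (r + 1) - c * b r) (i : ℕ) :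
    b i ^ 2 = ∑ j ∈ range (i + 1), b (2 * j) * c ^ (i - j) := by
  induction i with
  | zero => simp [hb0]
  | succ i ih =>
    have hdouble : b (2 * (i + 1)) = b (i + 1) ^ 2 - c * b i ^ 2 := by
      rw [show 2 * (i + 1) = i + i + 2 by ring, apply_add_add_two_of_recurrence hb0 hrec]
      ring
    have hshift : ∑ j ∈ range (i + 1), b (2 * j) * c ^ (i + 1 - j) =
        c * ∑ j ∈ range (i + 1), b (2 * j) * c ^ (i - j) := by
      rw [mul_sum]
      refine sum_congr rfl fun j hj => ?_
      rw [Nat.sub_add_comm (Nat.lt_succ_iff.mp (mem_range.mp hj)), pow_succ]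
      ring
    rw [sum_range_succ, hshift, ← ih, hdouble, Nat.sub_self, pow_zero]
    ring

end Recurrence

theorem ArithmeticFunction.mul_apply_prime_pow {R : Type*} [Semiring R]
    (f g : ArithmeticFunction R) {p : ℕ} (hp : p.Prime) (i : ℕ) :
    (f * g) (p ^ i) = ∑ j ∈ range (i + 1), f (p ^ j) * g (p ^ (i - j)) := by
  rw [mul_apply, Nat.sum_divisorsAntidiagonal (f := fun x y => f x * g y),
    Nat.sum_divisors_prime_pow hp]
  refine sum_congr rfl fun j hj => ?_
  rw [Nat.pow_div (Nat.lt_succ_iff.mp (mem_range.mp hj)) hp.pos]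

theorem isMultiplicative_toArithmeticFunction {R : Type*} [MonoidWithZero R] {f : ℕ → R}
    (h1 : f 1 = 1) (hmul : ∀ m n, m.Coprime n → f (m * n) = f m * f n) :
    (toArithmeticFunction f).IsMultiplicative := by
  refine IsMultiplicative.iff_ne_zero.mpr ⟨by simp [toArithmeticFunction, h1], ?_⟩
  intro m n hm hn hmn
  simp [toArithmeticFunction, hm, hn, hmul m n hmn]

namespace LSeries

theorem term_eq_mul_cpow_neg {s : ℂ} (hs : s ≠ 0) (f : ℕ → ℂ) (n : ℕ) :
    term f s n = f n * (n : ℂ) ^ (-s) := by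
  rw [term_of_ne_zero' hs, cpow_neg, div_eq_mul_inv]

theorem term_mul_natPow (f : ℕ → ℂ) (m : ℕ) (s : ℂ) :
    term (fun n => f n * (n : ℂ) ^ m) s = term f (s - m) := by
  ext n
  rcases eq_or_ne n 0 with rfl | hn
  · simp
  · have hn' : (n : ℂ) ≠ 0 := Nat.cast_ne_zero.mpr hn
    rw [term_of_ne_zero hn, term_of_ne_zero hn, cpow_sub _ _ hn', cpow_natCast]
    field_simp

end LSeries

theorem LSeriesSummable_of_norm_le_natPow {f : ℕ → ℂ} {m : ℕ} {s : ℂ} (hs : m + 1 < s.re)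
    (hf : ∀ n ≠ 0, ‖f n‖ ≤ (n : ℝ) ^ m) : LSeriesSummable f s := by
  refine LSeriesSummable_of_le_const_mul_rpow hs ⟨1, fun n hn => ?_⟩
  rw [one_mul, add_sub_cancel_right, Real.rpow_natCast]
  exact hf n hn

theorem LSeriesSummable.summable_norm_mul_cpow_neg {f : ℕ → ℂ} {s : ℂ} (hs : s ≠ 0)
    (h : LSeriesSummable f s) : Summable fun n : ℕ => ‖f n * (n : ℂ) ^ (-s)‖ :=
  h.norm.congr fun n => by rw [term_eq_mul_cpow_neg hs]

theorem LSeries_eq_tsum_mul_cpow_neg {s : ℂ} (hs : s ≠ 0) (f : ℕ → ℂ) :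
    LSeries f s = ∑' n : ℕ, f n * (n : ℂ) ^ (-s) :=
  tsum_congr (term_eq_mul_cpow_neg hs f)

theorem LSeries_mul_natPow (f : ℕ → ℂ) (m : ℕ) (s : ℂ) :
    LSeries (fun n => f n * (n : ℂ) ^ m) s = LSeries f (s - m) := by
  rw [LSeries, term_mul_natPow, LSeries]

theorem LSeriesSummable_mul_natPow_iff {f : ℕ → ℂ} {m : ℕ} {s : ℂ} :
    LSeriesSummable (fun n => f n * (n : ℂ) ^ m) s ↔ LSeriesSummable f (s - m) := by
  rw [LSeriesSummable, term_mul_natPow, LSeriesSummable]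

theorem DirichletCharacter.apply_eq_zero_of_not_coprime {R : Type*} [CommMonoidWithZero R]
    {N : ℕ} (ψ : DirichletCharacter R N) {n : ℕ} (hn : ¬ n.Coprime N) : ψ n = 0 :=
  ψ.map_nonunit (mt (ZMod.isUnit_iff_coprime n N).mp hn)

section HeckeEigenform

variable {N k : ℕ} {ψ : DirichletCharacter ℂ N} {a : ℕ → ℂ}

theorem hecke_recurrence_of_prime
    (hgood : ∀ (l : ℕ), l.Prime → ¬ l ∣ N → ∀ r : ℕ,
      a (l ^ (r + 2)) = a l * a (l ^ (r + 1)) - ψ (l : ZMod N) * (l : ℂ) ^ (k + 1) * a (l ^ r))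
    (hbad : ∀ (l : ℕ), l.Prime → l ∣ N → ∀ r : ℕ, a (l ^ (r + 1)) = a l * a (l ^ r))
    {p : ℕ} (hp : p.Prime) (r : ℕ) :
    a (p ^ (r + 2)) =
      a p * a (p ^ (r + 1)) - ψ (p : ZMod N) * (p : ℂ) ^ (k + 1) * a (p ^ r) := by
  by_cases hpN : p ∣ N
  · rw [ψ.apply_eq_zero_of_not_coprime (hp.dvd_iff_not_coprime.mp hpN), hbad p hp hpN]
    ring
  · exact hgood p hp hpN r

theorem toArithmeticFunction_sq_eq_mul (h1 : a 1 = 1)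
    (hmul : ∀ m n : ℕ, Nat.Coprime m n → a (m * n) = a m * a n)
    (hrec : ∀ p : ℕ, p.Prime → ∀ r : ℕ,
      a (p ^ (r + 2)) = a p * a (p ^ (r + 1)) - ψ (p : ZMod N) * (p : ℂ) ^ (k + 1) * a (p ^ r)) :
    toArithmeticFunction (a · ^ 2) =
      toArithmeticFunction (fun n => a (n ^ 2)) *
        toArithmeticFunction (fun n => ψ (n : ZMod N) * (n : ℂ) ^ (k + 1)) := by
  have hF := isMultiplicative_toArithmeticFunction (f := (a · ^ 2)) (by simp [h1])
    fun m n hmn => by simp only [hmul m n hmn, mul_pow]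
  have hG := isMultiplicative_toArithmeticFunction (f := fun n => a (n ^ 2)) (by simp [h1])
    fun m n hmn => by simp only [mul_pow, hmul _ _ (hmn.pow 2 2)]
  have hH := isMultiplicative_toArithmeticFunction
    (f := fun n => ψ (n : ZMod N) * (n : ℂ) ^ (k + 1)) (by simp)
    fun m n _ => by push_cast; rw [map_mul]; ring
  refine (hF.eq_iff_eq_on_prime_powers _ _ (hG.mul hH)).mpr fun p i hp => ?_
  have hpow : ∀ j, p ^ j ≠ 0 := fun j => pow_ne_zero j hp.ne_zero
  rw [mul_apply_prime_pow _ _ hp]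
  simp only [toArithmeticFunction, coe_mk, hpow, if_false, ← pow_mul, Nat.cast_pow, map_pow]
  refine (sq_eq_sum_of_recurrence (b := fun r => a (p ^ r)) (by simpa using h1)
    (fun r => by simpa using hrec p hp r) i).trans (sum_congr rfl fun j _ => ?_)
  rw [mul_comm j 2, mul_pow, ← pow_mul, mul_comm (k + 1)]

theorem LSeries_sq_eq_mul (h1 : a 1 = 1)
    (hmul : ∀ m n : ℕ, Nat.Coprime m n → a (m * n) = a m * a n)
    (hrec : ∀ p : ℕ, p.Prime → ∀ r : ℕ,
      a (p ^ (r + 2)) = a p * a (p ^ (r + 1)) - ψ (p : ZMod N) * (p : ℂ) ^ (k + 1) * a (p ^ r))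
    {s : ℂ} (hG : LSeriesSummable (fun n => a (n ^ 2)) s)
    (hψ : LSeriesSummable (fun n => ψ (n : ZMod N)) (s - (k + 1 : ℕ))) :
    LSeries (a · ^ 2) s =
      LSeries (fun n => a (n ^ 2)) s * LSeries (fun n => ψ (n : ZMod N)) (s - (k + 1 : ℕ)) := by
  rw [← LSeries_mul_natPow, ← LSeries_convolution' hG (LSeriesSummable_mul_natPow_iff.mpr hψ),
    LSeries.convolution, ← toArithmeticFunction_sq_eq_mul h1 hmul hrec]
  exact LSeries_congr (fun hn => by simp [toArithmeticFunction, hn]) s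

end HeckeEigenform

theorem imprimitive_rankin_selberg_factorisation_general
    (N : ℕ) (k : ℕ) (ψ : DirichletCharacter ℂ N) (a : ℕ → ℂ)
    (h1 : a 1 = 1)
    (hmul : ∀ m n : ℕ, Nat.Coprime m n → a (m * n) = a m * a n)
    (hgood : ∀ (l : ℕ), l.Prime → ¬ l ∣ N → ∀ r : ℕ,
      a (l ^ (r + 2)) = a l * a (l ^ (r + 1)) - ψ (l : ZMod N) * (l : ℂ) ^ (k + 1) * a (l ^ r))
    (hbad : ∀ (l : ℕ), l.Prime → l ∣ N → ∀ r : ℕ,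
      a (l ^ (r + 1)) = a l * a (l ^ r))
    (hbound : ∀ n : ℕ, 1 ≤ n → ‖a n‖ ≤ (n : ℝ) ^ (k + 1))
    (s : ℂ) (hs : (2 * k + 3 : ℝ) < s.re) :
    (Summable fun n : ℕ => ‖a n ^ 2 * (n : ℂ) ^ (-s)‖) ∧
    (Summable fun n : ℕ => ‖a (n ^ 2) * (n : ℂ) ^ (-s)‖) ∧
    (Summable fun n : ℕ => ‖ψ (n : ZMod N) * (n : ℂ) ^ ((k : ℂ) + 1 - s)‖) ∧
    (∑' n : ℕ, a n ^ 2 * (n : ℂ) ^ (-s)) =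
      (∑' n : ℕ, a (n ^ 2) * (n : ℂ) ^ (-s)) *
        (∑' n : ℕ, ψ (n : ZMod N) * (n : ℂ) ^ ((k : ℂ) + 1 - s)) ∧
    -- Equivalently, with `L_{(N)}(ψ, w) = ∑_{gcd(n,N)=1} ψ(n)·n^{−w}`:
    -- `L(f,f,s) = L^{imp}(Sym² f, s) · L_{(N)}(ψ, s−k−1)`.
    (∑' n : ℕ, (if Nat.Coprime n N then (ψ (n : ZMod N)) ^ 2 * (n : ℂ) ^ (-(2 * s - 2 - 2 * (k : ℂ))) else 0)) *
        (∑' n : ℕ, a n ^ 2 * (n : ℂ) ^ (-s)) =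
      ((∑' n : ℕ, (if Nat.Coprime n N then (ψ (n : ZMod N)) ^ 2 * (n : ℂ) ^ (-(2 * s - 2 * (k : ℂ) - 2)) else 0)) *
          (∑' n : ℕ, a (n ^ 2) * (n : ℂ) ^ (-s))) *
        (∑' n : ℕ, (if Nat.Coprime n N then ψ (n : ZMod N) * (n : ℂ) ^ (-(s - (k : ℂ) - 1)) else 0)) := by
  have hs0 : s ≠ 0 := ne_of_apply_ne re (by rw [zero_re]; linarith)
  have hψre : 1 < (s - (k + 1 : ℕ)).re := by
    rw [sub_re, natCast_re]
    push_cast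
    linarith
  have hψs : s - (k + 1 : ℕ) ≠ 0 := ne_of_apply_ne re (by rw [zero_re]; linarith)
  have hF : LSeriesSummable (a · ^ 2) s :=
    LSeriesSummable_of_norm_le_natPow (m := 2 * k + 2) (by push_cast; linarith) fun n hn => by
      rw [norm_pow, show 2 * k + 2 = (k + 1) * 2 by ring, pow_mul]
      exact pow_le_pow_left₀ (norm_nonneg _) (hbound n (Nat.one_le_iff_ne_zero.mpr hn)) 2
  have hG : LSeriesSummable (fun n => a (n ^ 2)) s :=
    LSeriesSummable_of_norm_le_natPow (m := 2 * k + 2) (by push_cast; linarith) fun n hn =>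
      (hbound _ (Nat.one_le_iff_ne_zero.mpr (pow_ne_zero 2 hn))).trans_eq (by push_cast; ring)
  have hψ := ψ.LSeriesSummable_of_one_lt_re hψre
  have hexp : -(s - ((k + 1 : ℕ) : ℂ)) = (k : ℂ) + 1 - s := by push_cast; ring
  have hL := LSeries_sq_eq_mul h1 hmul (fun p hp => hecke_recurrence_of_prime hgood hbad hp) hG hψ
  simp only [LSeries_eq_tsum_mul_cpow_neg hs0, LSeries_eq_tsum_mul_cpow_neg hψs, hexp] at hL
  have hcoprime : (∑' n : ℕ, (if Nat.Coprime n N then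
      ψ (n : ZMod N) * (n : ℂ) ^ (-(s - (k : ℂ) - 1)) else 0)) =
        ∑' n : ℕ, ψ (n : ZMod N) * (n : ℂ) ^ ((k : ℂ) + 1 - s) := by
    refine tsum_congr fun n => ?_
    split_ifs with hn
    · rw [show -(s - (k : ℂ) - 1) = (k : ℂ) + 1 - s by ring]
    · rw [ψ.apply_eq_zero_of_not_coprime hn, zero_mul]
  refine ⟨hF.summable_norm_mul_cpow_neg hs0, hG.summable_norm_mul_cpow_neg hs0,
    by simpa only [hexp] using hψ.summable_norm_mul_cpow_neg hψs, hL, ?_⟩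
  rw [hcoprime, hL, show -(2 * s - 2 - 2 * (k : ℂ)) = -(2 * s - 2 * (k : ℂ) - 2) by ring]
  ring

theorem imprimitive_rankin_selberg_factorisation
    (N : ℕ) (k : ℕ) (ψ : DirichletCharacter ℂ N) (a : ℕ → ℂ)
    (h0 : a 0 = 0) (h1 : a 1 = 1)
    (hmul : ∀ m n : ℕ, Nat.Coprime m n → a (m * n) = a m * a n)
    (hgood : ∀ (l : ℕ), l.Prime → ¬ l ∣ N → ∀ r : ℕ,
      a (l ^ (r + 2)) = a l * a (l ^ (r + 1)) - ψ (l : ZMod N) * (l : ℂ) ^ (k + 1) * a (l ^ r))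
    (hbad : ∀ (l : ℕ), l.Prime → l ∣ N → ∀ r : ℕ,
      a (l ^ (r + 1)) = a l * a (l ^ r))
    (hbound : ∀ n : ℕ, 1 ≤ n → ‖a n‖ ≤ (n : ℝ) ^ (k + 1))
    (s : ℂ) (hs : (2 * k + 3 : ℝ) < s.re) :
    (Summable fun n : ℕ => ‖a n ^ 2 * (n : ℂ) ^ (-s)‖) ∧
    (Summable fun n : ℕ => ‖a (n ^ 2) * (n : ℂ) ^ (-s)‖) ∧
    (Summable fun n : ℕ => ‖ψ (n : ZMod N) * (n : ℂ) ^ ((k : ℂ) + 1 - s)‖) ∧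
    (∑' n : ℕ, a n ^ 2 * (n : ℂ) ^ (-s)) =
      (∑' n : ℕ, a (n ^ 2) * (n : ℂ) ^ (-s)) *
        (∑' n : ℕ, ψ (n : ZMod N) * (n : ℂ) ^ ((k : ℂ) + 1 - s)) ∧
    -- Equivalently, with `L_{(N)}(ψ, w) = ∑_{gcd(n,N)=1} ψ(n)·n^{−w}`:
    -- `L(f,f,s) = L^{imp}(Sym² f, s) · L_{(N)}(ψ, s−k−1)`.
    (∑' n : ℕ, (if Nat.Coprime n N then (ψ (n : ZMod N)) ^ 2 * (n : ℂ) ^ (-(2 * s - 2 - 2 * (k : ℂ))) else 0)) *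
        (∑' n : ℕ, a n ^ 2 * (n : ℂ) ^ (-s)) =
      ((∑' n : ℕ, (if Nat.Coprime n N then (ψ (n : ZMod N)) ^ 2 * (n : ℂ) ^ (-(2 * s - 2 * (k : ℂ) - 2)) else 0)) *
          (∑' n : ℕ, a (n ^ 2) * (n : ℂ) ^ (-s))) *
        (∑' n : ℕ, (if Nat.Coprime n N then ψ (n : ZMod N) * (n : ℂ) ^ (-(s - (k : ℂ) - 1)) else 0)) :=
  imprimitive_rankin_selberg_factorisation_general N k ψ a h1 hmul hgood hbad hbound s hs
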